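/- A Hermitian matrix X ∈ Mat_n(ℂ) is an abelian self-commutator in Mat_n(ℂ) (i.e. there exists Y ∈ Mat_n(ℂ) with (Y Y*)(Y* Y) = (Y* Y)(Y Y*) and X = Y Y* − Y* Y) if and only if trace(X) = 0. -/

import Mathlib

/-!
Necessity: the trace of `Y Yᴴ - Yᴴ Y` vanishes. Sufficiency: a Hermitian matrix is unitarily
conjugate to the diagonal matrix of its eigenvalues, and after a permutation these are sorted,
`d₀ ≤ ⋯ ≤ dₙ₋₁`, with sum zero. Sortedness makes the partial sums `Sₘ = -(d₀ + ⋯ + dₘ₋₁)`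
nonnegative, with `S₀ = Sₙ = 0`. The weighted shift `A eⱼ = √Sⱼ₊₁ eⱼ₊₁` then has
`A Aᴴ = diag (Sᵢ)` and `Aᴴ A = diag (Sᵢ₊₁)`: both are diagonal, so they commute, and their
difference is `diag (dᵢ)`.
-/

open scoped Matrix
open Finset Matrix

def IsAbelianSelfCommutator {R : Type*} [Mul R] [Sub R] [Star R] (x : R) : Prop :=
  ∃ y : R, Commute (y * star y) (star y * y) ∧ x = y * star y - star y * y

namespace IsAbelianSelfCommutator

theorem map {R S F : Type*} [Ring R] [Star R] [Ring S] [Star S] [FunLike F R S]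
    [RingHomClass F R S] [StarHomClass F R S] (f : F) {x : R} (hx : IsAbelianSelfCommutator x) :
    IsAbelianSelfCommutator (f x) := by
  obtain ⟨y, hcomm, rfl⟩ := hx
  refine ⟨f y, ?_, ?_⟩
  · simpa only [← map_star, ← map_mul] using hcomm.map f
  · simp only [map_sub, map_mul, map_star]

theorem submatrix_equiv {m n α : Type*} [Fintype m] [Fintype n] [Ring α] [Star α]
    {X : Matrix n n α} (hX : IsAbelianSelfCommutator X) (e : m ≃ n) :
    IsAbelianSelfCommutator (X.submatrix e e) := by
  obtain ⟨Y, hcomm, rfl⟩ := hX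
  refine ⟨Y.submatrix e e, ?_, ?_⟩
  · simp only [star_eq_conjTranspose, conjTranspose_submatrix, submatrix_mul_equiv] at hcomm ⊢
    rw [Commute, SemiconjBy, submatrix_mul_equiv, submatrix_mul_equiv, hcomm.eq]
  · simp only [star_eq_conjTranspose, conjTranspose_submatrix, submatrix_mul_equiv]
    rfl

theorem trace_eq_zero {n α : Type*} [Fintype n] [CommRing α] [Star α]
    {X : Matrix n n α} (hX : IsAbelianSelfCommutator X) : X.trace = 0 := by
  obtain ⟨Y, -, rfl⟩ := hX
  rw [trace_sub, trace_mul_comm, sub_self]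

end IsAbelianSelfCommutator

/-- Chebyshev's sum inequality against the indicator of the complement of `s`. -/
theorem Monotone.sum_nonpos_of_isLowerSet {ι α : Type*} [LinearOrder ι] [Fintype ι]
    [CommRing α] [LinearOrder α] [IsStrictOrderedRing α] {d : ι → α} (hd : Monotone d)
    (h0 : ∑ i, d i = 0) {s : Finset ι} (hs : IsLowerSet (s : Set ι)) : ∑ i ∈ s, d i ≤ 0 := by
  set g : ι → α := fun i => if i ∈ s then 0 else 1
  have hg : Monotone g := by
    intro i j hij
    by_cases hj : j ∈ s
    · simp [g, hj, show i ∈ s from hs hij hj]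
    · by_cases hi : i ∈ s <;> simp [g, hi, hj]
  have hcheb := (hd.monovary hg).sum_mul_sum_le_card_mul_sum
  have hdg : ∑ i, d i * g i = ∑ i ∈ sᶜ, d i := by
    rw [← sum_compl_add_sum s, sum_eq_zero (s := s) fun i hi => by simp [g, hi], add_zero]
    exact sum_congr rfl fun i hi => by simp [g, mem_compl.mp hi]
  have hsplit := (sum_compl_add_sum s d).trans h0
  rw [h0, zero_mul, hdg] at hcheb
  by_contra! hpos
  obtain ⟨i, -⟩ := nonempty_of_sum_ne_zero hpos.ne'
  have hcard : (0 : α) < Fintype.card ι := by exact_mod_cast Fintype.card_pos_iff.mpr ⟨i⟩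
  nlinarith

namespace Matrix

section WeightedShift

variable {α : Type*} [Semiring α] [StarAddMonoid α] {n : ℕ}

/-- Weights are indexed by `ℕ` so that `w 0` and `w n` can serve as boundary values. -/
def weightedShift (n : ℕ) (w : ℕ → α) : Matrix (Fin n) (Fin n) α :=
  of fun i j => if (i : ℕ) = j + 1 then w i else 0

theorem weightedShift_mul_conjTranspose {w : ℕ → α} (hw : w 0 = 0) :
    weightedShift n w * (weightedShift n w)ᴴ = diagonal fun i : Fin n => w i * star (w i) := by
  ext i k
  simp only [weightedShift, mul_apply, conjTranspose_apply, of_apply, diagonal_apply]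
  by_cases hik : i = k
  · subst hik
    rcases Nat.eq_zero_or_pos i with h | h
    · simp [h, hw]
    · obtain ⟨m, hm⟩ : ∃ m, (i : ℕ) = m + 1 := ⟨i - 1, by omega⟩
      rw [sum_eq_single ⟨m, by omega⟩]
      · simp [hm]
      · intro j _ hj
        simp [hm, Fin.ext_iff] at hj ⊢
        omega
      · simp
  · refine (sum_eq_zero fun j _ => ?_).trans (if_neg hik).symm
    split_ifs <;> simp_all [Fin.ext_iff]

theorem conjTranspose_mul_weightedShift {w : ℕ → α} (hw : w n = 0) :
    (weightedShift n w)ᴴ * weightedShift n w =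
      diagonal fun i : Fin n => star (w (i + 1)) * w (i + 1) := by
  ext i k
  simp only [weightedShift, mul_apply, conjTranspose_apply, of_apply, diagonal_apply]
  by_cases hik : i = k
  · subst hik
    rcases lt_or_ge (i + 1 : ℕ) n with h | h
    · rw [sum_eq_single ⟨i + 1, h⟩] <;> simp +contextual [Fin.ext_iff]
    · have hi : (i : ℕ) + 1 = n := by omega
      have hj (j : Fin n) : (j : ℕ) ≠ i + 1 := by omega
      rw [sum_eq_zero fun j _ => by simp [hj j], hi, hw]
      simp
  · refine (sum_eq_zero fun j _ => ?_).trans (if_neg hik).symm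
    split_ifs <;> simp_all [Fin.ext_iff]

end WeightedShift

variable {𝕜 : Type*} [RCLike 𝕜] {n : ℕ}

theorem isAbelianSelfCommutator_diagonal_sub {S : ℕ → ℝ} (hS : ∀ m, 0 ≤ S m) (h0 : S 0 = 0)
    (hn : S n = 0) :
    IsAbelianSelfCommutator (diagonal fun i : Fin n => ((S i - S (i + 1) : ℝ) : 𝕜)) := by
  set w : ℕ → 𝕜 := fun m => (√(S m) : 𝕜)
  have hw (m : ℕ) : w m * star (w m) = S m := by
    simp [w, RCLike.star_def, ← RCLike.ofReal_mul, Real.mul_self_sqrt (hS m)]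
  have hAAH := weightedShift_mul_conjTranspose (n := n) (w := w) (by simp [w, h0])
  have hAHA := conjTranspose_mul_weightedShift (n := n) (w := w) (by simp [w, hn])
  refine ⟨weightedShift n w, ?_, ?_⟩
  · rw [star_eq_conjTranspose, hAAH, hAHA]
    exact commute_diagonal _ _
  · rw [star_eq_conjTranspose, hAAH, hAHA, diagonal_sub]
    congr 1
    ext i
    rw [hw, mul_comm, hw]
    push_cast
    rfl

theorem _root_.Monotone.isAbelianSelfCommutator_diagonal {d : Fin n → ℝ} (hd : Monotone d)
    (h0 : ∑ i, d i = 0) : IsAbelianSelfCommutator (diagonal fun i => (d i : 𝕜)) := by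
  set S : ℕ → ℝ := fun m => -∑ i : Fin n with i.val < m, d i
  have hS (m : ℕ) : 0 ≤ S m := by
    refine neg_nonneg.mpr (hd.sum_nonpos_of_isLowerSet h0 fun a b hba ha => ?_)
    simp only [coe_filter, Set.mem_ofPred_eq, mem_univ, true_and] at ha ⊢
    exact lt_of_le_of_lt (Fin.le_def.mp hba) ha
  have hstep (i : Fin n) : S i - S (i + 1) = d i := by
    have hinsert : ∑ j : Fin n with j.val < i.val + 1, d j =
        d i + ∑ j : Fin n with j.val < i.val, d j := by
      rw [← sum_insert (by simp)]
      congr 1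
      ext j
      simp [Fin.ext_iff]
      omega
    simp only [S, hinsert]
    ring
  convert isAbelianSelfCommutator_diagonal_sub (𝕜 := 𝕜) (n := n) hS (by simp [S])
    (by simpa [S] using h0) using 4 with i
  rw [hstep]

theorem isAbelianSelfCommutator_diagonal_of_sum_eq_zero {d : Fin n → ℝ} (h0 : ∑ i, d i = 0) :
    IsAbelianSelfCommutator (diagonal fun i => (d i : 𝕜)) := by
  have hsorted := (Tuple.monotone_sort d).isAbelianSelfCommutator_diagonal (𝕜 := 𝕜)
    ((Equiv.sum_comp (Tuple.sort d) d).trans h0)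
  simpa [submatrix_diagonal_equiv, Function.comp_def] using
    hsorted.submatrix_equiv (Tuple.sort d).symm

theorem IsHermitian.isAbelianSelfCommutator_of_trace_eq_zero {X : Matrix (Fin n) (Fin n) 𝕜}
    (hX : X.IsHermitian) (htr : X.trace = 0) : IsAbelianSelfCommutator X := by
  rw [hX.spectral_theorem]
  refine IsAbelianSelfCommutator.map _ (isAbelianSelfCommutator_diagonal_of_sum_eq_zero ?_)
  rw [hX.trace_eq_sum_eigenvalues] at htr
  exact_mod_cast htr

end Matrix

/-- A Hermitian matrix `X ∈ Mat_n(ℂ)` is an abelian self-commutator if and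
only if `trace X = 0`. -/
theorem hermitian_abelian_self_commutator_iff_trace_zero
    (n : ℕ) (X : Matrix (Fin n) (Fin n) ℂ) (hX : X.IsHermitian) :
    (∃ Y : Matrix (Fin n) (Fin n) ℂ,
      (Y * Yᴴ) * (Yᴴ * Y) = (Yᴴ * Y) * (Y * Yᴴ) ∧
      X = Y * Yᴴ - Yᴴ * Y) ↔ X.trace = 0 :=
  ⟨IsAbelianSelfCommutator.trace_eq_zero, hX.isAbelianSelfCommutator_of_trace_eq_zero⟩
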